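/- If φ ∈ L^∞(𝕋) is not in H^∞, then φ is of bounded type (a quotient of two H^∞ functions) if and only if the Hankel operator H_φ has nontrivial kernel. -/

import Mathlib

open MeasureTheory Complex Submodule
noncomputable section
instance fact2pi : Fact (0 < 2 * Real.pi) := ⟨by positivity⟩
instance factTop1 : Fact ((1:ENNReal) ≤ (⊤:ENNReal)) := ⟨le_top⟩
/-- the circle group -/
abbrev Tc := AddCircle (2 * Real.pi)
/-- normalized Haar measure on the circle -/
abbrev muh : Measure Tc := AddCircle.haarAddCircle
/-- L² of the circle -/
abbrev L2 := Lp ℂ 2 muh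
/-- L^∞ of the circle -/
abbrev Linf := Lp ℂ ⊤ muh

/-- The Hardy space `H²` as a closed subspace of `L²` of the circle. -/
def H2 : Submodule ℂ L2 :=
  (span ℂ (Set.range fun n : ℕ => (fourierLp 2 (n : ℤ) : L2))).topologicalClosure

theorem isClosed_H2 : IsClosed (H2 : Set L2) := Submodule.isClosed_topologicalClosure _
instance : CompleteSpace H2 := IsClosed.completeSpace_coe (hs := isClosed_H2)

theorem memLp2_mul (φ : Linf) (g : L2) :
    MemLp ((φ : Tc → ℂ) • (g : Tc → ℂ)) 2 muh :=
  MemLp.smul (Lp.memLp g) (Lp.memLp φ)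

/-- multiplication of an `L∞` function and an `L²` function, as an element of `L²`. -/
def mulL2 (φ : Linf) (g : L2) : L2 := (memLp2_mul φ g).toLp _

theorem mulL2_add (φ : Linf) (g h : L2) : mulL2 φ (g + h) = mulL2 φ g + mulL2 φ h := by
  simp only [mulL2]
  rw [← MemLp.toLp_add]
  apply MemLp.toLp_congr
  filter_upwards [Lp.coeFn_add g h] with x hx
  simp only [Pi.mul_apply, Pi.smul_apply, smul_eq_mul, hx, Pi.add_apply]
  ring

theorem mulL2_smul (φ : Linf) (c : ℂ) (g : L2) : mulL2 φ (c • g) = c • mulL2 φ g := by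
  simp only [mulL2]
  rw [← MemLp.toLp_const_smul]
  apply MemLp.toLp_congr
  filter_upwards [Lp.coeFn_smul c g] with x hx
  simp only [Pi.mul_apply, Pi.smul_apply, smul_eq_mul, hx]
  ring

theorem mulL2_norm (φ : Linf) (g : L2) : ‖mulL2 φ g‖ ≤ ‖φ‖ * ‖g‖ := by
  rw [mulL2, Lp.norm_toLp]
  have h := eLpNorm_le_eLpNorm_top_mul_eLpNorm 2 (φ : Tc → ℂ) (Lp.aestronglyMeasurable g)
      (fun a b => a * b) 1 (Filter.Eventually.of_forall fun x => by simp)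
  calc (eLpNorm ((φ : Tc → ℂ) • (g : Tc → ℂ)) 2 muh).toReal
      ≤ (eLpNorm (φ : Tc → ℂ) ⊤ muh * eLpNorm (g : Tc → ℂ) 2 muh).toReal := by
        apply ENNReal.toReal_mono
        · exact ENNReal.mul_ne_top (Lp.eLpNorm_ne_top φ) (Lp.eLpNorm_ne_top g)
        · rw [ENNReal.coe_one, one_mul] at h
          exact h
    _ = ‖φ‖ * ‖g‖ := by
        rw [ENNReal.toReal_mul, Lp.norm_def, Lp.norm_def]

/-- Multiplication by an `L^∞` function as a continuous linear operator on `L²`. -/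
def Mmul (φ : Linf) : L2 →L[ℂ] L2 :=
  LinearMap.mkContinuous
    { toFun := mulL2 φ
      map_add' := mulL2_add φ
      map_smul' := mulL2_smul φ } ‖φ‖ (mulL2_norm φ)

/-- the orthogonal projection `P : L² → H²`. -/
abbrev P2 : L2 →L[ℂ] ↥H2 := orthogonalProjection H2

/-- The Toeplitz operator with symbol `φ ∈ L^∞`, acting on `H²`: `T_φ g = P (φ g)`. -/
def Toep (φ : Linf) : ↥H2 →L[ℂ] ↥H2 := P2 ∘L (Mmul φ) ∘L H2.subtypeL

/-- The Toeplitz operator, viewed as a map `L² → L²` (useful to avoid coercions). -/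
def TopL (φ : Linf) : L2 →L[ℂ] L2 := H2.subtypeL ∘L P2 ∘L Mmul φ

theorem memLpTop_mul (φ ψ : Linf) : MemLp ((φ : Tc → ℂ) • (ψ : Tc → ℂ)) ⊤ muh :=
  MemLp.smul (Lp.memLp ψ) (Lp.memLp φ)

/-- `L^∞` is closed under products; we register this as a `Mul` instance. -/
instance : Mul Linf := ⟨fun φ ψ => (memLpTop_mul φ ψ).toLp _⟩

/-- the constant function `1` in `L^∞`. -/
instance : One Linf := ⟨(memLp_top_const (1 : ℂ)).toLp _⟩

/-- the embedding of `L^∞` into `L²` (the measure is finite). -/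
def toL2 (φ : Linf) : L2 := ((Lp.memLp φ).mono_exponent le_top).toLp _

/-- `H^∞`: the essentially bounded functions lying in the Hardy space. -/
def Hinf : Set Linf := {φ | toL2 φ ∈ H2}

/-- pointwise complex conjugation on `L²`. -/
def conjL2 (f : L2) : L2 :=
  ((Complex.conjCLE.toContinuousLinearMap).comp_memLp' (Lp.memLp f)).toLp _

/-- pointwise complex conjugation on `L^∞`. -/
def conjLinf (φ : Linf) : Linf :=
  ((Complex.conjCLE.toContinuousLinearMap).comp_memLp' (Lp.memLp φ)).toLp _

/-- composition with `z ↦ z⁻¹` (i.e. `x ↦ -x` on the additive circle) on `L²`. -/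
def compNegL2 : L2 →ₗᵢ[ℂ] L2 :=
  Lp.compMeasurePreservingₗᵢ ℂ (fun x : Tc => -x) (Measure.measurePreserving_neg muh)

/-- composition with `z ↦ z⁻¹` on `L^∞`. -/
def compNegLinf (φ : Linf) : Linf :=
  Lp.compMeasurePreserving (fun x : Tc => -x) (Measure.measurePreserving_neg muh) φ

/-- `φ̃(z) = conj (φ (z̄))`. -/
def tildeL (φ : Linf) : Linf := conjLinf (compNegLinf φ)

/-- `f̃(z) = conj (f (z̄))` on `L²`. -/
def tilde2 (f : L2) : L2 := conjL2 (compNegL2 f)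

/-- the unitary `J` on `L²`: `(J f)(z) = z̄ f(z̄)`. -/
def Jop : L2 →L[ℂ] L2 := (Mmul (fourierLp ⊤ (-1))) ∘L compNegL2.toContinuousLinearMap

/-- the projection onto `(H²)^⊥`. -/
def PperpL : L2 →L[ℂ] L2 := ContinuousLinearMap.id ℂ L2 - H2.subtypeL ∘L P2

/-- The Hankel operator with symbol `φ`: `H_φ g = J P^⊥ (φ g)`. -/
def Hank (φ : Linf) : ↥H2 →L[ℂ] L2 := Jop ∘L PperpL ∘L (Mmul φ) ∘L H2.subtypeL

/-- the self-commutator `[T^*, T] = T^*T - TT^*`. -/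
def selfCommOp {H : Type*} [NormedAddCommGroup H] [InnerProductSpace ℂ H] [CompleteSpace H]
    (T : H →L[ℂ] H) : H →L[ℂ] H :=
  ContinuousLinearMap.adjoint T ∘L T - T ∘L ContinuousLinearMap.adjoint T

/-- hyponormality of a Hilbert-space operator. -/
def IsHyponormalOp {H : Type*} [NormedAddCommGroup H] [InnerProductSpace ℂ H] [CompleteSpace H]
    (T : H →L[ℂ] H) : Prop := (selfCommOp T).IsPositive

/-- normality of a Hilbert-space operator. -/
def IsNormalOp {H : Type*} [NormedAddCommGroup H] [InnerProductSpace ℂ H] [CompleteSpace H]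
    (T : H →L[ℂ] H) : Prop := selfCommOp T = 0

/-- finite rank operator. -/
def FiniteRankOp {H : Type*} [NormedAddCommGroup H] [InnerProductSpace ℂ H]
    (T : H →L[ℂ] H) : Prop := FiniteDimensional ℂ ↥(LinearMap.range (T : H →ₗ[ℂ] H))

/-- `φ` is of bounded type: a quotient of two `H^∞` functions. -/
def BoundedType (φ : Linf) : Prop :=
  ∃ ψ₁ ψ₂ : Linf, ψ₁ ∈ Hinf ∧ ψ₂ ∈ Hinf ∧ (∀ᵐ x ∂muh, (ψ₂ : Tc → ℂ) x ≠ 0) ∧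
    (∀ᵐ x ∂muh, (φ : Tc → ℂ) x = (ψ₁ : Tc → ℂ) x / (ψ₂ : Tc → ℂ) x)

/-- scalar inner function. -/
def IsInner (θ : Linf) : Prop := θ ∈ Hinf ∧ ∀ᵐ x ∂muh, ‖(θ : Tc → ℂ) x‖ = 1

/-- constant function in `L^∞`. -/
def IsConstLinf (θ : Linf) : Prop := ∃ c : ℂ, θ = c • (1 : Linf)

/-- the boundary function `z = e^{ix}` on the circle. -/
def zfun : Tc → ℂ := fun x => fourier 1 x

/-- finite Blaschke product. -/
def IsFiniteBlaschke (θ : Linf) : Prop :=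
  ∃ (c : ℂ) (N : ℕ) (α : Fin N → ℂ), ‖c‖ = 1 ∧ (∀ i, ‖α i‖ < 1) ∧
    ∀ᵐ x ∂muh, (θ : Tc → ℂ) x =
      c * ∏ i, (zfun x - α i) / (1 - (starRingEnd ℂ (α i)) * zfun x)

/-- divisibility of inner functions: `θ` divides `θ'`. -/
def InnerDivides (θ θ' : Linf) : Prop := ∃ ω : Linf, IsInner ω ∧ θ' = θ * ω

/-- evaluation of an `H²` function inside the disk, via its Taylor (Fourier) coefficients. -/
def evalDisk (f : L2) (α : ℂ) : ℂ := ∑' k : ℕ, fourierCoeff (f : Tc → ℂ) (k : ℤ) * α ^ k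

/-- the model space `H_θ = H² ⊖ θH²`. -/
def ModelSpace (θ : Linf) : Submodule ℂ L2 := H2 ⊓ (Submodule.map (Mmul θ : L2 →ₗ[ℂ] L2) H2)ᗮ

/-- outer function: the closed span of its (analytic) polynomial multiples is all of `H²`. -/
def IsOuter (h : L2) : Prop :=
  (span ℂ (Set.range fun n : ℕ => mulL2 (fourierLp ⊤ (n : ℤ)) h)).topologicalClosure = H2

/-- `h` coincides with an `H^∞` function which is invertible in `H^∞`. -/
def InvertibleHinf (h : L2) : Prop :=
  ∃ u v : Linf, toL2 u = h ∧ u ∈ Hinf ∧ v ∈ Hinf ∧ u * v = 1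

/-- the set `E(φ)` appearing in Cowen's hyponormality criterion. -/
def Ecal (φ : Linf) : Set Linf :=
  {k | k ∈ Hinf ∧ ‖k‖ ≤ 1 ∧ φ - k * conjLinf φ ∈ Hinf}

theorem isClosed_modelSpace (θ : Linf) : IsClosed ((ModelSpace θ : Set L2)) := by
  rw [ModelSpace, Submodule.coe_inf]
  exact isClosed_H2.inter (Submodule.isClosed_orthogonal _)

instance (θ : Linf) : CompleteSpace (ModelSpace θ) :=
  IsClosed.completeSpace_coe (hs := isClosed_modelSpace θ)

/-- the orthogonal projection of `L²` onto the model space `H_θ`, as an endomorphism of `L²`. -/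
def Pmodel (θ : Linf) : L2 →L[ℂ] L2 :=
  (ModelSpace θ).subtypeL ∘L orthogonalProjection (ModelSpace θ)

/-!
If `g ≠ 0` lies in the kernel of `H_φ`, then `K = {f ∈ H² : φ f ∈ H²}` is a nonzero closed
subspace of `H²` invariant under multiplication by `z`. Since `⋂ zⁿ H² = 0`, `zK ≠ K`, and a
vector `θ ≠ 0` of `K ⊖ zK` is orthogonal to all `zⁿ θ` with `n ≥ 1`. Thus every nonconstant
Fourier coefficient of `|θ|²` vanishes, so `|θ|` is an a.e. constant `‖θ‖ > 0`. Then `θ ∈ H^∞`,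
`φθ ∈ H² ∩ L^∞ = H^∞`, and `φ = (φθ) / θ`. Conversely, `φ = ψ₁ / ψ₂` puts `ψ₂` into the kernel.
-/

open scoped InnerProductSpace ComplexConjugate NNReal ENNReal

section IntegralCLM

variable {X : Type*} [TopologicalSpace X] [CompactSpace X] [MeasurableSpace X] [BorelSpace X]

def ContinuousMap.integralCLM (μ : Measure X) [IsFiniteMeasure μ] : C(X, ℂ) →L[ℂ] ℂ :=
  L1.integralCLM' ℂ ∘L ContinuousMap.toLp 1 μ ℂ

theorem ContinuousMap.integralCLM_apply (μ : Measure X) [IsFiniteMeasure μ] (f : C(X, ℂ)) :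
    ContinuousMap.integralCLM μ f = ∫ x, f x ∂μ := by
  rw [integralCLM, ContinuousLinearMap.comp_apply, ← L1.integral_eq', L1.integral_eq_integral]
  exact integral_congr_ae (ContinuousMap.coeFn_toLp μ f)

end IntegralCLM

namespace AddCircle

variable {T : ℝ} [Fact (0 < T)]

theorem measure_eq_of_integral_fourier_eq {μ ν : Measure (AddCircle T)} [IsFiniteMeasure μ]
    [IsFiniteMeasure ν] (h : ∀ n : ℤ, ∫ x, fourier n x ∂μ = ∫ x, fourier n x ∂ν) : μ = ν := by
  have hC : ∀ f : C(AddCircle T, ℂ), ∫ x, f x ∂μ = ∫ x, f x ∂ν := by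
    let Λ := ContinuousMap.integralCLM μ - ContinuousMap.integralCLM ν
    have hspan : span ℂ (Set.range fourier) ≤ LinearMap.ker (Λ : C(AddCircle T, ℂ) →ₗ[ℂ] ℂ) := by
      rw [span_le]
      rintro _ ⟨n, rfl⟩
      change ContinuousMap.integralCLM μ _ - ContinuousMap.integralCLM ν _ = 0
      rw [ContinuousMap.integralCLM_apply, ContinuousMap.integralCLM_apply, h n, sub_self]
    have hker := topologicalClosure_minimal _ hspan Λ.isClosed_ker
    rw [span_fourier_closure_eq_top] at hker
    intro f
    simpa [Λ, ContinuousMap.integralCLM_apply, sub_eq_zero] using hker (mem_top (x := f))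
  refine ext_of_forall_integral_eq_of_IsFiniteMeasure fun f => ?_
  have hf := hC ⟨fun x => (f x : ℂ), by fun_prop⟩
  simp only [ContinuousMap.coe_mk] at hf
  exact_mod_cast hf

theorem integral_fourier {n : ℤ} (hn : n ≠ 0) : ∫ x, fourier n x ∂haarAddCircle (T := T) = 0 := by
  simpa [fourierCoeff, hn] using congrFun (fourierCoeff_fourier (T := T) n) 0

theorem ae_eq_integral_of_fourierCoeff_eq_zero {w : AddCircle T → ℝ≥0} (hw : Measurable w)
    (hint : Integrable (fun x => (w x : ℝ)) haarAddCircle)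
    (h : ∀ n ≠ 0, fourierCoeff (T := T) (fun x => ((w x : ℝ) : ℂ)) n = 0) :
    ∀ᵐ x ∂haarAddCircle, (w x : ℝ) = ∫ y, (w y : ℝ) ∂haarAddCircle := by
  set c : ℝ≥0 := ⟨∫ y, (w y : ℝ) ∂haarAddCircle, integral_nonneg fun y => (w y).2⟩
  have : IsFiniteMeasure (haarAddCircle.withDensity fun x => (w x : ℝ≥0∞)) :=
    isFiniteMeasure_withDensity (by simpa using hint.lintegral_lt_top.ne)
  have : IsFiniteMeasure ((haarAddCircle (T := T)).withDensity fun _ => (c : ℝ≥0∞)) :=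
    isFiniteMeasure_withDensity (by simp)
  have hμ := measure_eq_of_integral_fourier_eq (T := T)
    (μ := haarAddCircle.withDensity fun x => (w x : ℝ≥0∞))
    (ν := (haarAddCircle (T := T)).withDensity fun _ => (c : ℝ≥0∞)) fun n => by
      rw [integral_withDensity_eq_integral_smul hw,
        integral_withDensity_eq_integral_smul measurable_const]
      simp only [NNReal.smul_def, Complex.real_smul]
      rw [integral_const_mul]
      rcases eq_or_ne n 0 with rfl | hn
      · simp only [fourier_zero, mul_one, integral_const, probReal_univ, one_smul]
        exact integral_complex_ofReal
      · have hcoeff := h (-n) (neg_ne_zero.mpr hn)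
        simp only [fourierCoeff, neg_neg, smul_eq_mul] at hcoeff
        rw [integral_fourier hn, mul_zero, ← hcoeff]
        simp only [mul_comm]
  filter_upwards [(withDensity_eq_iff_of_sigmaFinite hw.coe_nnreal_ennreal.aemeasurable
    aemeasurable_const).mp hμ] with x hx
  exact congrArg NNReal.toReal (ENNReal.coe_inj.mp hx)

end AddCircle

theorem coeFn_Mmul (φ : Linf) (g : L2) : Mmul φ g =ᵐ[muh] fun x => φ x * g x :=
  (memLp2_mul φ g).coeFn_toLp

theorem coeFn_toL2 (φ : Linf) : toL2 φ =ᵐ[muh] φ :=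
  MemLp.coeFn_toLp _

theorem Linf.coeFn_mul (φ ψ : Linf) : ⇑(φ * ψ) =ᵐ[muh] fun x => φ x * ψ x :=
  (memLpTop_mul φ ψ).coeFn_toLp

theorem toL2_mul (φ ψ : Linf) : toL2 (φ * ψ) = Mmul φ (toL2 ψ) := by
  apply Lp.ext
  filter_upwards [coeFn_toL2 (φ * ψ), Linf.coeFn_mul φ ψ, coeFn_Mmul φ (toL2 ψ), coeFn_toL2 ψ]
    with x h₁ h₂ h₃ h₄
  rw [h₁, h₂, h₃, h₄]

theorem Mmul_comm (φ ψ : Linf) (f : L2) : Mmul φ (Mmul ψ f) = Mmul ψ (Mmul φ f) := by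
  apply Lp.ext
  filter_upwards [coeFn_Mmul φ (Mmul ψ f), coeFn_Mmul ψ f, coeFn_Mmul ψ (Mmul φ f),
    coeFn_Mmul φ f] with x h₁ h₂ h₃ h₄
  rw [h₁, h₂, h₃, h₄, mul_left_comm]

theorem Mmul_fourierLp_Mmul_fourierLp (m n : ℤ) (f : L2) :
    Mmul (fourierLp ⊤ m) (Mmul (fourierLp ⊤ n) f) = Mmul (fourierLp ⊤ (m + n)) f := by
  apply Lp.ext
  filter_upwards [coeFn_Mmul (fourierLp ⊤ m) (Mmul (fourierLp ⊤ n) f), coeFn_Mmul _ f,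
    coeFn_Mmul (fourierLp ⊤ (m + n)) f, coeFn_fourierLp ⊤ m, coeFn_fourierLp ⊤ n,
    coeFn_fourierLp ⊤ (m + n)] with x h₁ h₂ h₃ h₄ h₅ h₆
  rw [h₁, h₂, h₃, h₄, h₅, h₆, fourier_add, mul_assoc]

theorem Mmul_fourierLp_zero (f : L2) : Mmul (fourierLp ⊤ 0) f = f := by
  apply Lp.ext
  filter_upwards [coeFn_Mmul (fourierLp ⊤ 0) f, coeFn_fourierLp ⊤ 0] with x h₁ h₂
  rw [h₁, h₂, fourier_zero, one_mul]

theorem Mmul_fourierLp_fourierLp (m n : ℤ) :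
    Mmul (fourierLp ⊤ m) (fourierLp 2 n) = fourierLp 2 (m + n) := by
  apply Lp.ext
  filter_upwards [coeFn_Mmul (fourierLp ⊤ m) (fourierLp 2 n), coeFn_fourierLp ⊤ m,
    coeFn_fourierLp 2 n, coeFn_fourierLp 2 (m + n)] with x h₁ h₂ h₃ h₄
  rw [h₁, h₂, h₃, h₄, fourier_add]

theorem inner_eq_integral (f g : L2) : ⟪f, g⟫_ℂ = ∫ x, conj (f x) * g x ∂muh := by
  simp_rw [L2.inner_def, RCLike.inner_apply']

theorem inner_Mmul_fourierLp_left (n : ℤ) (f g : L2) :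
    ⟪Mmul (fourierLp ⊤ n) f, g⟫_ℂ = ⟪f, Mmul (fourierLp ⊤ (-n)) g⟫_ℂ := by
  rw [inner_eq_integral, inner_eq_integral]
  apply integral_congr_ae
  filter_upwards [coeFn_Mmul (fourierLp ⊤ n) f, coeFn_Mmul (fourierLp ⊤ (-n)) g,
    coeFn_fourierLp ⊤ n, coeFn_fourierLp ⊤ (-n)] with x h₁ h₂ h₃ h₄
  rw [h₁, h₂, h₃, h₄, fourier_neg, map_mul]
  ring

theorem inner_fourierLp_Mmul_fourierLp (j m : ℤ) (f : L2) :
    ⟪fourierLp 2 j, Mmul (fourierLp ⊤ m) f⟫_ℂ = ⟪fourierLp 2 (j - m), f⟫_ℂ := by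
  rw [← neg_neg m, ← inner_Mmul_fourierLp_left, Mmul_fourierLp_fourierLp, neg_neg,
    neg_add_eq_sub]

theorem fourierCoeff_normSq (f : L2) (n : ℤ) :
    fourierCoeff (fun x => (((‖f x‖₊ ^ 2 : ℝ≥0) : ℝ) : ℂ)) n =
      ⟪f, Mmul (fourierLp ⊤ (-n)) f⟫_ℂ := by
  rw [inner_eq_integral, fourierCoeff]
  apply integral_congr_ae
  filter_upwards [coeFn_Mmul (fourierLp ⊤ (-n)) f, coeFn_fourierLp ⊤ (-n)] with x h₁ h₂
  rw [h₁, h₂, smul_eq_mul, NNReal.coe_pow, coe_nnnorm, Complex.ofReal_pow, ← Complex.conj_mul']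
  ring

theorem fourierLp_mem_H2 (n : ℕ) : fourierLp 2 (n : ℤ) ∈ H2 :=
  le_topologicalClosure _ (subset_span ⟨n, rfl⟩)

theorem Mmul_fourierLp_mem_H2 (m : ℕ) {f : L2} (hf : f ∈ H2) : Mmul (fourierLp ⊤ m) f ∈ H2 := by
  have hspan : span ℂ (Set.range fun n : ℕ => (fourierLp 2 (n : ℤ) : L2)) ≤
      H2.comap (Mmul (fourierLp ⊤ m) : L2 →ₗ[ℂ] L2) := by
    rw [span_le]
    rintro _ ⟨n, rfl⟩
    simpa [Mmul_fourierLp_fourierLp] using fourierLp_mem_H2 (m + n)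
  exact topologicalClosure_minimal _ hspan (isClosed_H2.preimage (Mmul _).continuous) hf

theorem inner_fourierLp_eq_zero_of_mem_H2 {f : L2} (hf : f ∈ H2) {j : ℤ} (hj : j < 0) :
    ⟪fourierLp 2 j, f⟫_ℂ = 0 := by
  have hspan : span ℂ (Set.range fun n : ℕ => (fourierLp 2 (n : ℤ) : L2)) ≤
      LinearMap.ker (innerSL ℂ (fourierLp 2 j : L2) : L2 →ₗ[ℂ] ℂ) := by
    rw [span_le]
    rintro _ ⟨n, rfl⟩
    exact orthonormal_fourier.2 (by omega)
  exact topologicalClosure_minimal _ hspan (innerSL ℂ _).isClosed_ker hf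

theorem eq_zero_of_forall_inner_fourierLp {f : L2} (h : ∀ j : ℤ, ⟪fourierLp 2 j, f⟫_ℂ = 0) :
    f = 0 := by
  refine fourierBasis.repr.map_eq_zero_iff.mp (lp.ext (funext fun j => ?_))
  rw [HilbertBasis.repr_apply_apply, coe_fourierBasis, h j]
  rfl

theorem norm_ae_eq_of_inner_Mmul_fourierLp_eq_zero {θ : L2}
    (h : ∀ n : ℕ, 0 < n → ⟪Mmul (fourierLp ⊤ n) θ, θ⟫_ℂ = 0) : ∀ᵐ x ∂muh, ‖θ x‖ = ‖θ‖ := by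
  have hcoeff : ∀ n ≠ 0, fourierCoeff (fun x => (((‖θ x‖₊ ^ 2 : ℝ≥0) : ℝ) : ℂ)) n = 0 := by
    intro n hn
    rw [fourierCoeff_normSq]
    rcases hn.lt_or_gt with hneg | hpos
    · lift -n to ℕ using (by omega) with k hk
      rw [← inner_conj_symm, h k (by omega), map_zero]
    · lift n to ℕ using hpos.le with k
      rw [← inner_Mmul_fourierLp_left, h k (by omega)]
  have hint : Integrable (fun x => ((‖θ x‖₊ ^ 2 : ℝ≥0) : ℝ)) muh := by
    simpa using (Lp.memLp θ).integrable_norm_pow two_ne_zero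
  have hconst := AddCircle.ae_eq_integral_of_fourierCoeff_eq_zero
    ((Lp.stronglyMeasurable θ).measurable.nnnorm.pow_const 2) hint hcoeff
  have hmean : ∫ x, ((‖θ x‖₊ ^ 2 : ℝ≥0) : ℝ) ∂muh = ‖θ‖ ^ 2 := by
    have h₀ := fourierCoeff_normSq θ 0
    rw [neg_zero, Mmul_fourierLp_zero, inner_self_eq_norm_sq_to_K, fourierCoeff] at h₀
    simp only [neg_zero, fourier_zero, one_smul] at h₀
    rw [integral_complex_ofReal] at h₀
    apply Complex.ofReal_injective
    rw [h₀]
    norm_cast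
  filter_upwards [hconst] with x hx
  rw [hmean, NNReal.coe_pow, coe_nnnorm] at hx
  exact (pow_left_inj₀ (norm_nonneg _) (norm_nonneg _) two_ne_zero).mp hx

section ShiftInvariant

variable {K : Submodule ℂ L2}

theorem Mmul_fourierLp_natCast_mul_mem {m : ℤ} (hK : ∀ f ∈ K, Mmul (fourierLp ⊤ m) f ∈ K)
    {f : L2} (hf : f ∈ K) (k : ℕ) : Mmul (fourierLp ⊤ (k * m)) f ∈ K := by
  induction k with
  | zero => simpa [Mmul_fourierLp_zero] using hf
  | succ k ih =>
    have hstep := hK _ ih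
    rwa [Mmul_fourierLp_Mmul_fourierLp, show m + k * m = ((k + 1 : ℕ) : ℤ) * m by push_cast; ring]
      at hstep

theorem eq_bot_of_le_H2_of_Mmul_fourierLp_neg_one_mem (hKH : K ≤ H2)
    (hK : ∀ f ∈ K, Mmul (fourierLp ⊤ (-1)) f ∈ K) : K = ⊥ := by
  refine (Submodule.eq_bot_iff K).mpr fun f hf => eq_zero_of_forall_inner_fourierLp fun j => ?_
  obtain ⟨k, hk⟩ : ∃ k : ℕ, j < k := ⟨j.toNat + 1, by omega⟩
  have hvanish := inner_fourierLp_eq_zero_of_mem_H2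
    (hKH (Mmul_fourierLp_natCast_mul_mem hK hf k)) (j := j - k) (by omega)
  rwa [inner_fourierLp_Mmul_fourierLp, show j - k - k * -1 = j by ring] at hvanish

theorem exists_ne_zero_inner_Mmul_fourierLp_eq_zero (hKc : IsClosed (K : Set L2))
    (hKH : K ≤ H2) (hKz : ∀ f ∈ K, Mmul (fourierLp ⊤ 1) f ∈ K) (hK : K ≠ ⊥) :
    ∃ θ ∈ K, θ ≠ 0 ∧ ∀ n : ℕ, 0 < n → ⟪Mmul (fourierLp ⊤ n) θ, θ⟫_ℂ = 0 := by
  -- `zK = z • K`, written as the preimage of `K` under multiplication by `z̄` to make it closed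
  set zK := K.comap (Mmul (fourierLp ⊤ (-1)) : L2 →ₗ[ℂ] L2)
  have hzK : zK ≤ K := fun f hf => by
    simpa [Mmul_fourierLp_Mmul_fourierLp, Mmul_fourierLp_zero] using hKz _ hf
  have : CompleteSpace zK := (hKc.preimage (Mmul _).continuous).completeSpace_coe
  obtain ⟨θ, ⟨hθzK, hθK⟩, hθ0⟩ : ∃ θ ∈ zKᗮ ⊓ K, θ ≠ 0 := by
    refine (Submodule.ne_bot_iff _).mp fun h => hK ?_
    have hsup := sup_orthogonal_inf_of_hasOrthogonalProjection hzK
    rw [h, sup_bot_eq] at hsup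
    refine eq_bot_of_le_H2_of_Mmul_fourierLp_neg_one_mem hKH fun f hf => ?_
    rwa [← hsup] at hf
  refine ⟨θ, hθK, hθ0, fun n hn => inner_right_of_mem_orthogonal ?_ hθzK⟩
  obtain ⟨k, rfl⟩ : ∃ k : ℕ, n = k + 1 := ⟨n - 1, by omega⟩
  rw [mem_comap, ContinuousLinearMap.coe_coe, Mmul_fourierLp_Mmul_fourierLp,
    show -1 + ((k + 1 : ℕ) : ℤ) = k * 1 by push_cast; ring]
  exact Mmul_fourierLp_natCast_mul_mem hKz hθK k

end ShiftInvariant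

def hankelKernel (φ : Linf) : Submodule ℂ L2 := H2 ⊓ H2.comap (Mmul φ : L2 →ₗ[ℂ] L2)

theorem isClosed_hankelKernel (φ : Linf) : IsClosed (hankelKernel φ : Set L2) :=
  isClosed_H2.inter (isClosed_H2.preimage (Mmul φ).continuous)

theorem Mmul_fourierLp_one_mem_hankelKernel {φ : Linf} {f : L2} (hf : f ∈ hankelKernel φ) :
    Mmul (fourierLp ⊤ 1) f ∈ hankelKernel φ := by
  obtain ⟨hfH, hφf⟩ := hf
  refine ⟨by simpa using Mmul_fourierLp_mem_H2 1 hfH, ?_⟩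
  rw [SetLike.mem_coe, mem_comap, ContinuousLinearMap.coe_coe, Mmul_comm]
  simpa using Mmul_fourierLp_mem_H2 1 hφf

theorem Jop_injective : Function.Injective Jop := by
  intro f g h
  have hz := congrArg (Mmul (fourierLp ⊤ 1)) h
  simp only [Jop, ContinuousLinearMap.comp_apply, Mmul_fourierLp_Mmul_fourierLp,
    add_neg_cancel, Mmul_fourierLp_zero] at hz
  exact compNegL2.injective hz

theorem PperpL_eq_zero_iff {f : L2} : PperpL f = 0 ↔ f ∈ H2 := by
  rw [PperpL, sub_apply, sub_eq_zero, eq_comm]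
  exact starProjection_eq_self_iff

theorem Hank_eq_zero_iff {φ : Linf} {g : H2} : Hank φ g = 0 ↔ (g : L2) ∈ hankelKernel φ := by
  rw [Hank, ContinuousLinearMap.comp_apply, ← map_zero Jop, Jop_injective.eq_iff]
  exact PperpL_eq_zero_iff.trans ⟨fun h => ⟨g.2, h⟩, fun h => h.2⟩

theorem boundedType_iff_exists_mem_hankelKernel {φ : Linf} :
    BoundedType φ ↔ ∃ ψ : Linf, toL2 ψ ∈ hankelKernel φ ∧ ∀ᵐ x ∂muh, ψ x ≠ 0 := by
  constructor
  · rintro ⟨ψ₁, ψ₂, hψ₁, hψ₂, hne, hφ⟩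
    have hmul : Mmul φ (toL2 ψ₂) = toL2 ψ₁ := by
      apply Lp.ext
      filter_upwards [coeFn_Mmul φ (toL2 ψ₂), coeFn_toL2 ψ₂, coeFn_toL2 ψ₁, hne, hφ]
        with x h₁ h₂ h₃ h₄ h₅
      rw [h₁, h₂, h₃, h₅, div_mul_cancel₀ _ h₄]
    exact ⟨ψ₂, ⟨hψ₂, show Mmul φ (toL2 ψ₂) ∈ H2 from hmul ▸ hψ₁⟩, hne⟩
  · rintro ⟨ψ, ⟨hψ, hφψ⟩, hne⟩
    refine ⟨φ * ψ, ψ, by simpa [Hinf, toL2_mul] using hφψ, hψ, hne, ?_⟩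
    filter_upwards [Linf.coeFn_mul φ ψ, hne] with x h₁ h₂
    rw [h₁, mul_div_cancel_right₀ _ h₂]

theorem exists_mem_hankelKernel_of_ne_bot {φ : Linf} (h : hankelKernel φ ≠ ⊥) :
    ∃ ψ : Linf, toL2 ψ ∈ hankelKernel φ ∧ ∀ᵐ x ∂muh, ψ x ≠ 0 := by
  obtain ⟨θ, hθK, hθ0, horth⟩ := exists_ne_zero_inner_Mmul_fourierLp_eq_zero
    (isClosed_hankelKernel φ) inf_le_left (fun _ => Mmul_fourierLp_one_mem_hankelKernel) h
  have hmod := norm_ae_eq_of_inner_Mmul_fourierLp_eq_zero horth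
  have hθ : MemLp θ ⊤ muh :=
    memLp_top_of_bound (Lp.aestronglyMeasurable θ) _ (hmod.mono fun x hx => hx.le)
  have hψ : toL2 (hθ.toLp θ) = θ := Lp.ext ((coeFn_toL2 _).trans hθ.coeFn_toLp)
  refine ⟨hθ.toLp θ, by rwa [hψ], ?_⟩
  filter_upwards [hθ.coeFn_toLp, hmod] with x h₁ h₂
  rw [h₁, ← norm_ne_zero_iff, h₂, norm_ne_zero_iff]
  exact hθ0

theorem boundedType_iff_hankel_ker_nontrivial_general (φ : Linf) :
    BoundedType φ ↔ LinearMap.ker (Hank φ : ↥H2 →ₗ[ℂ] L2) ≠ ⊥ := by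
  rw [boundedType_iff_exists_mem_hankelKernel]
  constructor
  · rintro ⟨ψ, hψK, hne⟩
    have hψ0 : toL2 ψ ≠ 0 := fun h0 => by
      obtain ⟨x, hx₁, hx₂, hx₃⟩ :=
        (hne.and ((coeFn_toL2 ψ).and (Lp.eq_zero_iff_ae_eq_zero.mp h0))).exists
      exact hx₁ (hx₂ ▸ hx₃)
    exact (Submodule.ne_bot_iff _).mpr
      ⟨⟨toL2 ψ, hψK.1⟩, Hank_eq_zero_iff.mpr hψK, fun h0 => hψ0 (congrArg Subtype.val h0)⟩
  · intro hker
    obtain ⟨g, hg, hg0⟩ := (Submodule.ne_bot_iff _).mp hker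
    exact exists_mem_hankelKernel_of_ne_bot ((Submodule.ne_bot_iff _).mpr
      ⟨g, Hank_eq_zero_iff.mp hg, fun h => hg0 (Subtype.ext h)⟩)

/-- for `φ ∈ L^∞ \ H^∞`, `φ` is of bounded type iff `ker H_φ ≠ {0}`. -/
theorem boundedType_iff_hankel_ker_nontrivial (φ : Linf) (hφ : toL2 φ ∉ H2) :
    BoundedType φ ↔ LinearMap.ker (Hank φ : ↥H2 →ₗ[ℂ] L2) ≠ ⊥ :=
  boundedType_iff_hankel_ker_nontrivial_general φ
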